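/- Let s ≥ 2 and a = (a_1, …, a_s) ∈ ℤ_{≥1}^s with a_1 > a_j for all 2 ≤ j ≤ s and gcd(a_1, a_2) = 1, and let d ≥ s. Let λ = (λ_0, …, λ_d) be a nonzero fundamental parallelepiped point of the multidiagonal simplex P(a;d) ⊆ ℝ^d, and let k be the largest index with λ_k ≠ 0. Then for every integer j with s−1 ≤ j ≤ k−1 such that the s consecutive coordinates λ_{k−j}, λ_{k−j+1}, …, λ_{k−j+s−1} are all nonzero, one has Σ_{i=0}^{s−1} λ_{k−j+i} > 1/a_1. -/

import Mathlib

open scoped BigOperators Pointwise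

/-- `lam` is a fundamental parallelepiped point for the simplex with vertices `v`:
`0 ≤ lam i < 1` for all `i` and `∑ i, lam i • (1, v i) ∈ ℤ^{n+1}`. -/
def IsFPP {N n : ℕ} (v : Fin N → Fin n → ℝ) (lam : Fin N → ℝ) : Prop :=
  (∀ i, 0 ≤ lam i ∧ lam i < 1) ∧
  (∃ z : ℤ, ∑ i, lam i = (z : ℝ)) ∧
  (∀ j, ∃ z : ℤ, ∑ i, lam i * v i j = (z : ℝ))

/-- Vertices of the multidiagonal simplex `P(a; d) ⊆ ℝ^d`:
`w_0 = 0` and `w_c = ∑_{i=1}^{min(s,c)} a_i e_{c+1-i}` for `1 ≤ c ≤ d`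
(coordinates are 0-indexed, so `e_t` is the indicator of index `t-1`). -/
def Wvert (s : ℕ) (a : Fin s → ℕ) (d : ℕ) : Fin (d + 1) → Fin d → ℝ := fun c p =>
  if h : (p : ℕ) < (c : ℕ) ∧ (c : ℕ) - (p : ℕ) ≤ s then
    (a ⟨(c : ℕ) - (p : ℕ) - 1, by omega⟩ : ℝ)
  else 0

/-! Write `m = k - j`. Only the vertices `w_m, …, w_{m+s-1}` have a nonzero entry in coordinate
`m - 1` of `ℝ^d`, namely `a_1, …, a_s`, so that coordinate of `∑ λ_c w_c` is
`∑_{i<s} λ_{m+i} a_{i+1}`. It is an integer, and positive because the block is nonzero, hence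
at least 1. Since every `a_{i+1} ≤ a_1` and `a_2 < a_1` with `λ_{m+1} > 0`, it is strictly less
than `a_1 ∑_{i<s} λ_{m+i}`. -/

theorem Fin.sum_univ_eq_sum_block {M : Type*} [AddCommMonoid M] {n s : ℕ} (m : ℕ)
    (h : m + s ≤ n) (f : Fin n → M) (hf : ∀ c : Fin n, (c : ℕ) < m ∨ m + s ≤ c → f c = 0) :
    ∑ c, f c = ∑ i : Fin s, f ⟨m + i, by omega⟩ := by
  let E : Fin s ↪ Fin n := (Fin.natAddEmb m).trans (Fin.castLEEmb h)
  rw [show ∑ i : Fin s, f ⟨m + i, by omega⟩ = ∑ i, f (E i) from rfl, ← Finset.sum_map]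
  refine (Finset.sum_subset (Finset.subset_univ _) fun c _ hc => hf c ?_).symm
  by_contra! hblock
  exact hc (Finset.mem_map.2 ⟨⟨c - m, by omega⟩, Finset.mem_univ _, Fin.ext (by simp [E]; omega)⟩)

section Wvert

variable {s d : ℕ} (a : Fin s → ℕ)

theorem Wvert_apply_eq_zero {m : ℕ} (hm : 1 ≤ m) (hmd : m ≤ d) (c : Fin (d + 1))
    (hc : (c : ℕ) < m ∨ m + s ≤ c) : Wvert s a d c ⟨m - 1, by omega⟩ = 0 :=
  dif_neg (by have := c.isLt; simp only; omega)

theorem Wvert_apply_block {m : ℕ} (hm : 1 ≤ m) (hmd : m ≤ d) (hms : m + s ≤ d + 1) (i : Fin s) :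
    Wvert s a d ⟨m + i, by omega⟩ ⟨m - 1, by omega⟩ = a i := by
  have := i.isLt
  rw [Wvert, dif_pos (by simp only; omega)]
  congr 2
  ext
  simp only
  omega

theorem sum_mul_Wvert_eq_block_sum (lam : Fin (d + 1) → ℝ) {m : ℕ} (hm : 1 ≤ m) (hmd : m ≤ d)
    (hms : m + s ≤ d + 1) :
    ∑ c, lam c * Wvert s a d c ⟨m - 1, by omega⟩ =
      ∑ i : Fin s, lam ⟨m + i, by omega⟩ * a i := by
  rw [Fin.sum_univ_eq_sum_block m hms]
  · simp only [Wvert_apply_block a hm hmd hms]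
  · intro c hc
    rw [Wvert_apply_eq_zero a hm hmd c hc, mul_zero]

end Wvert

theorem sum_mul_lt_mul_sum {ι : Type*} [Fintype ι] {x b : ι → ℝ} {B : ℝ}
    (hx : ∀ i, 0 ≤ x i) (hb : ∀ i, b i ≤ B) {i₀ : ι} (hx₀ : 0 < x i₀) (hb₀ : b i₀ < B) :
    ∑ i, x i * b i < B * ∑ i, x i := by
  rw [Finset.mul_sum]
  refine Finset.sum_lt_sum (fun i _ => ?_) ⟨i₀, Finset.mem_univ _, ?_⟩
  · rw [mul_comm]
    exact mul_le_mul_of_nonneg_right (hb i) (hx i)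
  · rw [mul_comm]
    exact mul_lt_mul_of_pos_right hb₀ hx₀

theorem one_div_lt_sum_of_sum_mul_eq_int {ι : Type*} [Fintype ι] {x b : ι → ℝ} {B : ℝ}
    (hx : ∀ i, 0 ≤ x i) (hb : ∀ i, b i ≤ B) {i₀ : ι} (hx₀ : 0 < x i₀) (hb₀ : b i₀ < B)
    {z : ℤ} (hz : ∑ i, x i * b i = z) (hpos : 0 < ∑ i, x i * b i) :
    1 / B < ∑ i, x i := by
  have hone : (1 : ℝ) ≤ ∑ i, x i * b i := by
    rw [hz] at hpos ⊢
    exact_mod_cast (show (0 : ℤ) < z by exact_mod_cast hpos)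
  have hlt : 1 < B * ∑ i, x i := hone.trans_lt (sum_mul_lt_mul_sum hx hb hx₀ hb₀)
  have hB : 0 < B := pos_of_mul_pos_left (one_pos.trans hlt) (Finset.sum_nonneg fun i _ => hx i)
  rwa [div_lt_iff₀ hB, mul_comm]

theorem stmt18 (s : ℕ) (hs : 2 ≤ s) (a : Fin s → ℕ)
    (hmax : ∀ i : Fin s, i ≠ ⟨0, by omega⟩ → a i < a ⟨0, by omega⟩)
    (d : ℕ) (hd : s ≤ d) (lam : Fin (d + 1) → ℝ)
    (hlam : IsFPP (Wvert s a d) lam)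
    (k : Fin (d + 1))
    (j : ℕ) (hj1 : s - 1 ≤ j) (hj2 : j ≤ (k : ℕ) - 1)
    (hnz : ∀ i : Fin s,
      lam ⟨(k : ℕ) - j + (i : ℕ), by have := i.isLt; have := k.isLt; omega⟩ ≠ 0) :
    1 / (a ⟨0, by omega⟩ : ℝ) <
      ∑ i : Fin s,
        lam ⟨(k : ℕ) - j + (i : ℕ), by have := i.isLt; have := k.isLt; omega⟩ := by
  obtain ⟨hbd, -, hcoord⟩ := hlam
  have hm : 1 ≤ (k : ℕ) - j := by omega
  have hms : (k : ℕ) - j + s ≤ d + 1 := by omega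
  obtain ⟨z, hz⟩ := hcoord ⟨(k : ℕ) - j - 1, by omega⟩
  rw [sum_mul_Wvert_eq_block_sum a lam hm (by omega) hms] at hz
  have hblock_pos : ∀ i : Fin s, 0 < lam ⟨(k : ℕ) - j + i, by omega⟩ := fun i =>
    (hbd _).1.lt_of_ne (hnz i).symm
  have ha_le : ∀ i, (a i : ℝ) ≤ a ⟨0, by omega⟩ := fun i => by
    by_cases hi : i = ⟨0, by omega⟩
    · rw [hi]
    · exact_mod_cast (hmax i hi).le
  have ha₁ : (a ⟨1, by omega⟩ : ℝ) < a ⟨0, by omega⟩ := by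
    exact_mod_cast hmax ⟨1, by omega⟩ (by simp [Fin.ext_iff])
  have hsum_pos : 0 < ∑ i : Fin s, lam ⟨(k : ℕ) - j + i, by omega⟩ * a i :=
    Finset.sum_pos' (fun i _ => mul_nonneg (hblock_pos i).le (Nat.cast_nonneg _))
      ⟨_, Finset.mem_univ _, mul_pos (hblock_pos _) ((Nat.cast_nonneg _).trans_lt ha₁)⟩
  exact one_div_lt_sum_of_sum_mul_eq_int (fun i => (hblock_pos i).le) ha_le
    (hblock_pos ⟨1, by omega⟩) ha₁ hz hsum_pos
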